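/- arXiv:1709.06464 — 6 statements merged into one kernel-verified Lean document; each statement's English description precedes it below -/
import Mathlib

section
/- For symmetric positive definite real n×n matrices A and B, the matrix B·A^{-1/2}·(A^{1/2}(A+B)A^{1/2})^{1/2}·A^{-1/2} is symmetric if and only if A and B commute. -/
/-! With `T = S⁻¹ R S⁻¹`, which is symmetric, the matrix in question is `B T` and
`T A T = A + B`; so it is symmetric iff `B` commutes with `T`. If `A` and `B` commute, `B`
commutes with the square roots `S` of `A` and `R` of `S (A + B) S`, hence with `T`. Conversely,
if `B = T A T - A` commutes with `T`, then `D = A T - T A` satisfies `T D T = D`. Since `B` is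
positive definite, every eigenvalue of `T` has `μ² > 1`, and in an eigenbasis of `T` the equation
reads `μᵢ μⱼ Dᵢⱼ = Dᵢⱼ`, so `D = 0`. -/

open Matrix

namespace Matrix

variable {n 𝕜 : Type*} [Fintype n] [DecidableEq n] [RCLike 𝕜]

open scoped ComplexOrder

protected theorem _root_.Commute.nonsing_inv_right {R : Type*} [CommRing R] {A B : Matrix n n R}
    (h : Commute A B) : Commute A B⁻¹ := by
  by_cases hB : IsUnit B.det
  · obtain ⟨u, rfl⟩ := B.isUnit_iff_isUnit_det.2 hB
    rw [← coe_units_inv]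
    exact h.units_inv_right
  · simp [nonsing_inv_apply_not_isUnit B hB]

open scoped MatrixOrder in
theorem PosSemidef.commute_of_commute_mul_self {C X : Matrix n n 𝕜} (hC : C.PosSemidef)
    (h : Commute X (C * C)) : Commute X C := by
  rw [← CFC.sqrt_mul_self C hC.nonneg]
  exact (h.symm.cfcₙ_nnreal _).symm

theorem IsHermitian.dotProduct_mulVec_mul_mul_eigenvectorBasis {T : Matrix n n 𝕜}
    (hT : T.IsHermitian) (A : Matrix n n 𝕜) (i : n) :
    star ⇑(hT.eigenvectorBasis i) ⬝ᵥ ((T * A * T) *ᵥ ⇑(hT.eigenvectorBasis i)) =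
      (hT.eigenvalues i ^ 2 : ℝ) *
        (star ⇑(hT.eigenvectorBasis i) ⬝ᵥ (A *ᵥ ⇑(hT.eigenvectorBasis i))) := by
  set v := ⇑(hT.eigenvectorBasis i)
  have hTv : T *ᵥ v = hT.eigenvalues i • v := hT.mulVec_eigenvectorBasis i
  have hvT : star v ᵥ* T = hT.eigenvalues i • star v := by
    conv_lhs => rw [← hT.eq, ← star_mulVec, hTv, star_smul, star_trivial]
  rw [← mulVec_mulVec, ← mulVec_mulVec, dotProduct_mulVec, hvT, hTv, mulVec_smul,
    smul_dotProduct, dotProduct_smul]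
  simp only [RCLike.real_smul_eq_coe_mul]
  push_cast
  ring

theorem IsHermitian.one_lt_sq_eigenvalues {T A : Matrix n n 𝕜} (hT : T.IsHermitian)
    (hA : A.PosSemidef) (hTAT : (T * A * T - A).PosDef) (i : n) :
    1 < hT.eigenvalues i ^ 2 := by
  set v := ⇑(hT.eigenvectorBasis i)
  have hv : v ≠ 0 := fun h ↦
    hT.eigenvectorBasis.orthonormal.ne_zero i (by ext k; exact congr_fun h k)
  have hpos := hTAT.dotProduct_mulVec_pos hv
  rw [sub_mulVec, dotProduct_sub, hT.dotProduct_mulVec_mul_mul_eigenvectorBasis, ← sub_one_mul,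
    ← RCLike.ofReal_one, ← RCLike.ofReal_sub] at hpos
  by_contra! hle
  exact hpos.not_ge <| mul_nonpos_of_nonpos_of_nonneg (by exact_mod_cast sub_nonpos.2 hle)
    (hA.dotProduct_mulVec_nonneg v)

theorem IsHermitian.eq_zero_of_mul_mul_eq_self {T D : Matrix n n 𝕜} (hT : T.IsHermitian)
    (hμ : ∀ i j, hT.eigenvalues i * hT.eigenvalues j ≠ 1) (hD : T * D * T = D) : D = 0 := by
  set φ := Unitary.conjStarAlgAut 𝕜 _ (star hT.eigenvectorUnitary)
  set Λ := diagonal (RCLike.ofReal ∘ hT.eigenvalues : n → 𝕜)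
  have hφT : φ T = Λ := hT.conjStarAlgAut_star_eigenvectorUnitary
  have hφD : Λ * φ D * Λ = φ D := by rw [← hφT, ← map_mul, ← map_mul, hD]
  rw [← map_eq_zero_iff φ φ.injective]
  ext i j
  have hij := congr_fun₂ hφD i j
  simp only [Λ, diagonal_mul, mul_diagonal, Function.comp_apply] at hij
  have : ((hT.eigenvalues i * hT.eigenvalues j : ℝ) - 1 : 𝕜) * φ D i j = 0 := by
    push_cast
    linear_combination hij
  exact (mul_eq_zero.1 this).resolve_left (sub_ne_zero.2 (by exact_mod_cast hμ i j))

theorem IsHermitian.commute_of_commute_mul_mul_sub {T A : Matrix n n 𝕜} (hT : T.IsHermitian)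
    (hA : A.PosSemidef) (hTAT : (T * A * T - A).PosDef) (h : Commute T (T * A * T - A)) :
    Commute A T := by
  have hμ : ∀ i j, hT.eigenvalues i * hT.eigenvalues j ≠ 1 := fun i j hij ↦ by
    nlinarith [hT.one_lt_sq_eigenvalues hA hTAT i, hT.one_lt_sq_eigenvalues hA hTAT j]
  have hD : T * (A * T - T * A) * T = A * T - T * A := by
    rw [← sub_eq_zero]
    calc T * (A * T - T * A) * T - (A * T - T * A)
        = (T * A * T - A) * T - T * (T * A * T - A) := by noncomm_ring
      _ = 0 := by rw [h.eq, sub_self]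
  exact sub_eq_zero.1 (hT.eq_zero_of_mul_mul_eq_self hμ hD)

end Matrix

theorem stmt_1_general {n : ℕ} (A B S R : Matrix (Fin n) (Fin n) ℝ)
    (hA : A.PosDef) (hB : B.PosDef)
    (hS : S.PosDef) (hSsq : S * S = A)
    (hR : R.PosDef) (hRsq : R * R = S * (A + B) * S) :
    (B * S⁻¹ * R * S⁻¹).IsSymm ↔ A * B = B * A := by
  have hSdet : IsUnit S.det := hS.det_pos.ne'.isUnit
  set T := S⁻¹ * R * S⁻¹ with hT
  have hTh : T.IsHermitian := by
    have := isHermitian_mul_mul_conjTranspose S⁻¹ hR.isHermitian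
    rwa [hS.isHermitian.inv.eq] at this
  have hTAT : T * A * T = A + B :=
    calc T * A * T = S⁻¹ * (R * R) * S⁻¹ := by
          simp only [hT, ← hSsq, Matrix.mul_assoc, nonsing_inv_mul_cancel_left _ _ hSdet,
            mul_nonsing_inv_cancel_left _ _ hSdet]
      _ = A + B := by
          simp only [hRsq, Matrix.mul_assoc, nonsing_inv_mul_cancel_left _ _ hSdet,
            mul_nonsing_inv _ hSdet, Matrix.mul_one]
  have hsymm : (B * S⁻¹ * R * S⁻¹).IsSymm ↔ Commute B T := by
    rw [hB.isHermitian.commute_iff hTh, hT]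
    simp [Matrix.mul_assoc]
  rw [hsymm]
  refine ⟨fun hBT ↦ ?_, fun (hAB : Commute A B) ↦ ?_⟩
  · have hB' : T * A * T - A = B := by rw [hTAT, add_sub_cancel_left]
    have hAT : Commute A T :=
      hTh.commute_of_commute_mul_mul_sub hA.posSemidef (hB' ▸ hB) (hB' ▸ hBT.symm)
    rw [← hB']
    exact ((hAT.mul_right (Commute.refl A)).mul_right hAT).sub_right (Commute.refl A)
  · have hBS := hS.posSemidef.commute_of_commute_mul_self (hSsq ▸ hAB.symm)
    have hBR := hR.posSemidef.commute_of_commute_mul_self (hRsq ▸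
      (hBS.mul_right (hAB.symm.add_right (Commute.refl B))).mul_right hBS)
    exact (hBS.nonsing_inv_right.mul_right hBR).mul_right hBS.nonsing_inv_right

/-- For symmetric positive definite A, B with S = A^{1/2} and
R = (A^{1/2}(A+B)A^{1/2})^{1/2}, the matrix B·S⁻¹·R·S⁻¹ is symmetric iff A and B
commute. -/
theorem stmt_1 {n : ℕ} (A B S R : Matrix (Fin n) (Fin n) ℝ)
    (hA : A.PosDef) (hAs : A.IsSymm) (hB : B.PosDef) (hBs : B.IsSymm)
    (hS : S.PosDef) (hSs : S.IsSymm) (hSsq : S * S = A)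
    (hR : R.PosDef) (hRs : R.IsSymm) (hRsq : R * R = S * (A + B) * S) :
    (B * S⁻¹ * R * S⁻¹).IsSymm ↔ A * B = B * A :=
  stmt_1_general A B S R hA hB hS hSsq hR hRsq
end

section
/- For symmetric positive definite real n×n matrices A and B, if the matrix A^{1/2}·B·A^{-1/2}·(A^{1/2}(A+B)A^{1/2})^{1/2} is symmetric, then B·(A+B) is symmetric, hence A·B = B·A. -/
/-!
Put `P = S⁻¹ R S⁻¹`. Then `P A P = A + B`, and the symmetry hypothesis says exactly that `P`
commutes with `B`. Hence `C = P A - A P` satisfies `P C P = P (A + B) - (A + B) P = C`. For an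
eigenvector `v` of `P` with eigenvalue `μ` we get `μ² v*Av = v*Av + v*Bv`, so `μ² > 1`; in an
eigenbasis of `P` the entries of `C` are therefore multiplied by numbers `μᵢ μⱼ ≠ 1`, which forces
`C = 0`. So `A` commutes with `P`, hence with `P A P = A + B`, hence with `B`.
-/

open Matrix
open scoped ComplexOrder

namespace Matrix

theorem eq_zero_of_diagonal_mul_mul_diagonal_eq_self {n R : Type*} [Fintype n] [DecidableEq n]
    [CommRing R] [NoZeroDivisors R] {d : n → R} (hd : ∀ i j, d i * d j ≠ 1) {Y : Matrix n n R}
    (h : diagonal d * Y * diagonal d = Y) : Y = 0 := by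
  ext i j
  have hij : d i * Y i j * d j = Y i j := by simpa [mul_comm] using congr_fun₂ h i j
  have : (d i * d j - 1) * Y i j = 0 := by linear_combination hij
  simpa [sub_eq_zero, hd i j] using this

section RCLike

variable {n 𝕜 : Type*} [Fintype n] [RCLike 𝕜]

theorem IsHermitian.eq_zero_of_mul_mul_eq_self_s2 [DecidableEq n] {P X : Matrix n n 𝕜}
    (hP : P.IsHermitian) (hμ : ∀ i j, hP.eigenvalues i * hP.eigenvalues j ≠ 1)
    (h : P * X * P = X) : X = 0 := by
  set d : n → 𝕜 := RCLike.ofReal ∘ hP.eigenvalues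
  set φ := Unitary.conjStarAlgAut 𝕜 _ (star hP.eigenvectorUnitary)
  have hD : diagonal d * φ X * diagonal d = φ X := by
    rw [← hP.conjStarAlgAut_star_eigenvectorUnitary, ← map_mul, ← map_mul, h]
  have hd : ∀ i j, d i * d j ≠ 1 := fun i j ↦ by
    simp only [d, Function.comp_apply]
    exact_mod_cast hμ i j
  exact (map_eq_zero_iff φ φ.injective).mp (eq_zero_of_diagonal_mul_mul_diagonal_eq_self hd hD)

theorem one_lt_sq_of_mul_mul_eq_add {P A B : Matrix n n 𝕜} (hP : P.IsHermitian) (hA : A.PosDef)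
    (hB : B.PosDef) (h : P * A * P = A + B) {v : n → 𝕜} (hv : v ≠ 0) {μ : ℝ}
    (hPv : P *ᵥ v = μ • v) : 1 < μ ^ 2 := by
  have hvP : star v ᵥ* P = μ • star v := by
    rw [← hP.eq, ← star_mulVec, hPv, star_smul, star_trivial]
  have hquad : star v ⬝ᵥ (P * A * P) *ᵥ v = (μ : 𝕜) ^ 2 * (star v ⬝ᵥ A *ᵥ v) := by
    rw [← mulVec_mulVec, ← mulVec_mulVec, dotProduct_mulVec, hvP, hPv]
    simp only [smul_dotProduct, dotProduct_smul, mulVec_smul,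
      RCLike.real_smul_eq_coe_smul (K := 𝕜), smul_eq_mul]
    ring
  obtain ⟨ha, -⟩ := RCLike.pos_iff.1 (hA.dotProduct_mulVec_pos hv)
  obtain ⟨hb, -⟩ := RCLike.pos_iff.1 (hB.dotProduct_mulVec_pos hv)
  rw [h, add_mulVec, dotProduct_add] at hquad
  have hquad_re := congr_arg RCLike.re hquad
  simp only [← RCLike.ofReal_pow, RCLike.re_ofReal_mul, map_add] at hquad_re
  nlinarith

theorem IsHermitian.commute_of_mul_mul_eq_add [DecidableEq n] {P A B : Matrix n n 𝕜}
    (hP : P.IsHermitian) (hA : A.PosDef) (hB : B.PosDef) (hPB : Commute P B)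
    (h : P * A * P = A + B) : Commute P A := by
  have hμ (i : n) : 1 < hP.eigenvalues i ^ 2 :=
    one_lt_sq_of_mul_mul_eq_add hP hA hB h
      ((WithLp.ofLp_eq_zero 2).ne.2 <| hP.eigenvectorBasis.orthonormal.ne_zero i)
      (hP.mulVec_eigenvectorBasis i)
  have hμμ (i j : n) : hP.eigenvalues i * hP.eigenvalues j ≠ 1 := fun hij ↦ by
    have := one_lt_mul_of_lt_of_le (hμ i) (hμ j).le
    rw [← mul_pow, hij, one_pow] at this
    exact this.false
  have hfix : P * (P * A - A * P) * P = P * A - A * P :=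
    calc P * (P * A - A * P) * P = P * (P * A * P) - (P * A * P) * P := by noncomm_ring
      _ = P * A - A * P := by rw [h, mul_add, add_mul, hPB.eq]; abel
  exact sub_eq_zero.1 (hP.eq_zero_of_mul_mul_eq_self_s2 hμμ hfix)

end RCLike

section CommRing

variable {n α : Type*} [Fintype n] [DecidableEq n] [CommRing α]

theorem riccati_of_mul_self_eq {S R C : Matrix n n α} (hS : IsUnit S.det)
    (h : R * R = S * C * S) : S⁻¹ * R * S⁻¹ * (S * S) * (S⁻¹ * R * S⁻¹) = C :=
  calc S⁻¹ * R * S⁻¹ * (S * S) * (S⁻¹ * R * S⁻¹) = S⁻¹ * (R * R) * S⁻¹ := by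
        simp only [← mul_assoc, nonsing_inv_mul_cancel_right, mul_nonsing_inv_cancel_right, hS]
    _ = C := by
        simp only [h, ← mul_assoc, nonsing_inv_mul, one_mul, mul_nonsing_inv_cancel_right, hS]

theorem commute_of_isSymm_mul_mul_nonsing_inv_mul {S B R : Matrix n n α} (hS : IsUnit S.det)
    (hSs : S.IsSymm) (hBs : B.IsSymm) (hRs : R.IsSymm) (h : (S * B * S⁻¹ * R).IsSymm) :
    Commute (S⁻¹ * R * S⁻¹) B := by
  have hSu : IsUnit S := (isUnit_iff_isUnit_det S).2 hS
  have hM : S * B * S⁻¹ * R = S * (B * (S⁻¹ * R * S⁻¹)) * S := by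
    simp only [← mul_assoc, nonsing_inv_mul_cancel_right, hS]
  have hMt : (S * B * S⁻¹ * R)ᵀ = S * ((S⁻¹ * R * S⁻¹) * B) * S := by
    simp only [transpose_mul, transpose_nonsing_inv, hSs.eq, hBs.eq, hRs.eq, mul_assoc,
      mul_nonsing_inv_cancel_left, hS]
  rw [h.eq, hM] at hMt
  exact (hSu.mul_left_cancel (hSu.mul_right_cancel hMt)).symm

end CommRing

end Matrix

theorem stmt_2_general {n : ℕ} (A B S R : Matrix (Fin n) (Fin n) ℝ)
    (hA : A.PosDef) (hAs : A.IsSymm) (hB : B.PosDef) (hBs : B.IsSymm)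
    (hS : S.PosDef) (hSs : S.IsSymm) (hSsq : S * S = A)
    (hRs : R.IsSymm) (hRsq : R * R = S * (A + B) * S)
    (h : (S * B * S⁻¹ * R).IsSymm) :
    (B * (A + B)).IsSymm ∧ A * B = B * A := by
  have hSu : IsUnit S.det := (isUnit_iff_isUnit_det S).1 hS.isUnit
  set P := S⁻¹ * R * S⁻¹
  have hP : P.IsHermitian := isHermitian_iff_isSymm.2 <| by
    simp only [P, IsSymm, transpose_mul, transpose_nonsing_inv, hSs.eq, hRs.eq, mul_assoc]
  have hPAP : P * A * P = A + B := by
    simpa only [hSsq] using riccati_of_mul_self_eq hSu hRsq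
  have hPB : Commute P B := commute_of_isSymm_mul_mul_nonsing_inv_mul hSu hSs hBs hRs h
  have hPA : Commute P A := hP.commute_of_mul_mul_eq_add hA hB hPB hPAP
  have hAB : Commute A B := by
    have hA_PAP : Commute A (P * A * P) := (hPA.symm.mul_right (Commute.refl A)).mul_right hPA.symm
    simpa only [hPAP, add_sub_cancel_left] using hA_PAP.sub_right (Commute.refl A)
  have hAh : A.IsHermitian := isHermitian_iff_isSymm.2 hAs
  have hBh : B.IsHermitian := isHermitian_iff_isSymm.2 hBs
  refine ⟨isHermitian_iff_isSymm.1 ?_, hAB.eq⟩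
  exact (hBh.commute_iff (hAh.add hBh)).1 (hAB.symm.add_right (Commute.refl B))

/-- For symmetric positive definite A, B, if A^{1/2}·B·A^{-1/2}·(A^{1/2}(A+B)A^{1/2})^{1/2}
is symmetric then B·(A+B) is symmetric, hence A·B = B·A. -/
theorem stmt_2 {n : ℕ} (A B S R : Matrix (Fin n) (Fin n) ℝ)
    (hA : A.PosDef) (hAs : A.IsSymm) (hB : B.PosDef) (hBs : B.IsSymm)
    (hS : S.PosDef) (hSs : S.IsSymm) (hSsq : S * S = A)
    (hR : R.PosDef) (hRs : R.IsSymm) (hRsq : R * R = S * (A + B) * S)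
    (h : (S * B * S⁻¹ * R).IsSymm) :
    (B * (A + B)).IsSymm ∧ A * B = B * A :=
  stmt_2_general A B S R hA hAs hB hBs hS hSs hSsq hRs hRsq h
end

section
/- Let Σ₀ and Σ₁ be symmetric positive definite n×n real matrices. The linear map x ↦ T x with T = Σ₀^{-1/2}(Σ₀^{1/2} Σ₁ Σ₀^{1/2})^{1/2} Σ₀^{-1/2} pushes the centered Gaussian measure with covariance Σ₀ forward to the centered Gaussian measure with covariance Σ₁, i.e., T Σ₀ Tᵀ = Σ₁. -/
open Matrix

/-- With S = Σ₀^{1/2} and R = (Σ₀^{1/2} Σ₁ Σ₀^{1/2})^{1/2}, the matrix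
T = S⁻¹·R·S⁻¹ pushes the centered Gaussian with covariance Σ₀ to the one with
covariance Σ₁, i.e. T Σ₀ Tᵀ = Σ₁. -/
theorem stmt_4 {n : ℕ} (Sigma0 Sigma1 S R : Matrix (Fin n) (Fin n) ℝ)
    (h0 : Sigma0.PosDef) (h0s : Sigma0.IsSymm) (h1 : Sigma1.PosDef) (h1s : Sigma1.IsSymm)
    (hS : S.PosDef) (hSs : S.IsSymm) (hSsq : S * S = Sigma0)
    (hR : R.PosDef) (hRs : R.IsSymm) (hRsq : R * R = S * Sigma1 * S) :
    (S⁻¹ * R * S⁻¹) * Sigma0 * (S⁻¹ * R * S⁻¹)ᵀ = Sigma1 := by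
  have hSinv : IsUnit S.det := isUnit_iff_ne_zero.mpr hS.det_pos.ne'
  have hinv : S⁻¹ * S = 1 := nonsing_inv_mul S hSinv
  have hinv' : S * S⁻¹ = 1 := mul_nonsing_inv S hSinv
  have hSti : S⁻¹ᵀ = S⁻¹ := by rw [transpose_nonsing_inv, hSs.eq]
  calc (S⁻¹ * R * S⁻¹) * Sigma0 * (S⁻¹ * R * S⁻¹)ᵀ
      = S⁻¹ * R * (S⁻¹ * (S * S) * S⁻¹) * R * S⁻¹ := by
        rw [← hSsq, transpose_mul, transpose_mul, hSti, hRs.eq]; noncomm_ring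
    _ = S⁻¹ * (R * R) * S⁻¹ := by
        rw [show S⁻¹ * (S * S) * S⁻¹ = (S⁻¹ * S) * (S * S⁻¹) by noncomm_ring, hinv, hinv',
          one_mul]; noncomm_ring
    _ = Sigma1 := by
        rw [hRsq, show S⁻¹ * (S * Sigma1 * S) * S⁻¹ = (S⁻¹ * S) * Sigma1 * (S * S⁻¹) by
          noncomm_ring, hinv, hinv', one_mul, mul_one]
end

section
/- Let t ↦ M(t) be a C¹ family of invertible n×n real matrices on [0, ∞) with M(0) = Id, satisfying M'(t) = W(t)·M(t) where each W(t) is symmetric positive semidefinite. Then for all t ≥ 0, the matrix M(t)ᵀ M(t) − Id is positive semidefinite; in particular the map x ↦ M(t) x is an expansion. -/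
/-!
For a fixed vector `x`, the derivative of `s ↦ |M(s) x|²` is `2 ⟪M(s) x, W(s) M(s) x⟫ ≥ 0`,
so this quantity is nondecreasing on `[0, ∞)` and `|M(t) x|² ≥ |M(0) x|² = |x|²`. This is exactly
`xᵀ (M(t)ᵀ M(t) - 1) x ≥ 0`, and also `‖x‖ ≤ ‖M(t) x‖`.
-/

open Matrix Set

namespace Matrix

variable {m n : Type*} [Fintype n]

theorem hasDerivWithinAt_mulVec_apply {M : ℝ → Matrix m n ℝ} {M' : Matrix m n ℝ}
    {D : Set ℝ} {t : ℝ} (hM : ∀ i j, HasDerivWithinAt (fun s => M s i j) (M' i j) D t)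
    (x : n → ℝ) (i : m) :
    HasDerivWithinAt (fun s => (M s *ᵥ x) i) ((M' *ᵥ x) i) D t := by
  simpa only [mulVec, dotProduct] using
    HasDerivWithinAt.fun_sum fun j _ => (hM i j).mul_const (x j)

theorem hasDerivWithinAt_mulVec_dotProduct_self [Fintype m] {M : ℝ → Matrix m n ℝ}
    {M' : Matrix m n ℝ} {D : Set ℝ} {t : ℝ}
    (hM : ∀ i j, HasDerivWithinAt (fun s => M s i j) (M' i j) D t) (x : n → ℝ) :
    HasDerivWithinAt (fun s => M s *ᵥ x ⬝ᵥ M s *ᵥ x)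
      (2 * (M' *ᵥ x ⬝ᵥ M t *ᵥ x)) D t := by
  have hv := hasDerivWithinAt_mulVec_apply hM x
  refine (HasDerivWithinAt.fun_sum (u := Finset.univ) fun i _ => (hv i).mul (hv i)).congr_deriv ?_
  simp only [dotProduct, Finset.mul_sum]
  exact Finset.sum_congr rfl fun i _ => by ring

theorem monotoneOn_mulVec_dotProduct_self [Fintype m] {M W : ℝ → Matrix m m ℝ} {D : Set ℝ}
    (hD : Convex ℝ D) (hW : ∀ t ∈ D, (W t).PosSemidef)
    (hM : ∀ t ∈ D, ∀ i j, HasDerivWithinAt (fun s => M s i j) ((W t * M t) i j) D t)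
    (x : m → ℝ) :
    MonotoneOn (fun s => M s *ᵥ x ⬝ᵥ M s *ᵥ x) D := by
  have hf t (ht : t ∈ D) := hasDerivWithinAt_mulVec_dotProduct_self (hM t ht) x
  refine monotoneOn_of_hasDerivWithinAt_nonneg hD (fun t ht => (hf t ht).continuousWithinAt)
    (fun t ht => (hf t (interior_subset ht)).mono interior_subset) fun t ht => ?_
  have hWv := (hW t (interior_subset ht)).dotProduct_mulVec_nonneg (M t *ᵥ x)
  rw [star_trivial, dotProduct_comm] at hWv
  rw [← mulVec_mulVec]
  positivity

variable [DecidableEq n]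

theorem posSemidef_transpose_mul_self_sub_one {N : Matrix n n ℝ}
    (hN : ∀ x, x ⬝ᵥ x ≤ N *ᵥ x ⬝ᵥ N *ᵥ x) : (Nᵀ * N - 1).PosSemidef := by
  refine .of_dotProduct_mulVec_nonneg ((isHermitian_conjTranspose_mul_self N).sub isHermitian_one)
    fun x => ?_
  rw [star_trivial, sub_mulVec, dotProduct_sub, one_mulVec, ← mulVec_mulVec,
    dotProduct_mulVec, vecMul_transpose, sub_nonneg]
  exact hN x

theorem norm_le_norm_toEuclideanLin {N : Matrix n n ℝ}
    (hN : ∀ x, x ⬝ᵥ x ≤ N *ᵥ x ⬝ᵥ N *ᵥ x) (x : EuclideanSpace ℝ n) :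
    ‖x‖ ≤ ‖N.toEuclideanLin x‖ := by
  have hsq (y : EuclideanSpace ℝ n) : ‖y‖ ^ 2 = y.ofLp ⬝ᵥ y.ofLp := by
    rw [← real_inner_self_eq_norm_sq, EuclideanSpace.inner_eq_star_dotProduct, star_trivial]
  rw [← sq_le_sq₀ (norm_nonneg _) (norm_nonneg _), hsq, hsq, toLpLin_apply]
  exact hN x.ofLp

end Matrix

theorem stmt_6_general {n : ℕ} (M W : ℝ → Matrix (Fin n) (Fin n) ℝ)
    (hWpsd : ∀ t ∈ Ici (0:ℝ), (W t).PosSemidef)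
    (hM0 : M 0 = 1)
    (hderiv : ∀ t ∈ Ici (0:ℝ), ∀ i j,
      HasDerivWithinAt (fun s => M s i j) ((W t * M t) i j) (Ici 0) t) :
    ∀ t ∈ Ici (0:ℝ), ((M t)ᵀ * M t - 1).PosSemidef ∧
      ∀ x : EuclideanSpace ℝ (Fin n), ‖x‖ ≤ ‖(M t).toEuclideanLin x‖ := by
  intro t ht
  have hexpand (x : Fin n → ℝ) : x ⬝ᵥ x ≤ M t *ᵥ x ⬝ᵥ M t *ᵥ x := by
    simpa [hM0] using
      monotoneOn_mulVec_dotProduct_self (convex_Ici 0) hWpsd hderiv x self_mem_Ici ht ht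
  exact ⟨posSemidef_transpose_mul_self_sub_one hexpand, norm_le_norm_toEuclideanLin hexpand⟩

/-- If M(t) is a C¹ family of matrices on [0,∞) with M(0) = Id and
M'(t) = W(t)·M(t) for W(t) symmetric positive semidefinite (W continuous), then
M(t)ᵀ M(t) − Id is positive semidefinite for all t ≥ 0; in particular x ↦ M(t) x
is an expansion. -/
theorem stmt_6 {n : ℕ} (M W : ℝ → Matrix (Fin n) (Fin n) ℝ)
    (hWcont : ∀ i j, ContinuousOn (fun t => W t i j) (Ici 0))
    (hWsymm : ∀ t ∈ Ici (0:ℝ), (W t).IsSymm)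
    (hWpsd : ∀ t ∈ Ici (0:ℝ), (W t).PosSemidef)
    (hM0 : M 0 = 1)
    (hMinv : ∀ t ∈ Ici (0:ℝ), IsUnit (M t))
    (hderiv : ∀ t ∈ Ici (0:ℝ), ∀ i j,
      HasDerivWithinAt (fun s => M s i j) ((W t * M t) i j) (Ici 0) t) :
    ∀ t ∈ Ici (0:ℝ), ((M t)ᵀ * M t - 1).PosSemidef ∧
      ∀ x : EuclideanSpace ℝ (Fin n), ‖x‖ ≤ ‖(M t).toEuclideanLin x‖ :=
  stmt_6_general M W hWpsd hM0 hderiv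
end

section
/- Uniqueness of symmetric-positive-definite linear transport between Gaussians: if M is a symmetric positive definite n×n matrix with M Σ₀ Mᵀ = Σ₁, where Σ₀, Σ₁ are symmetric positive definite, then M = Σ₀^{-1/2}(Σ₀^{1/2} Σ₁ Σ₀^{1/2})^{1/2} Σ₀^{-1/2}. -/
open Matrix

/-! Conjugating by `S = Σ₀^{1/2}` turns `M Σ₀ M = Σ₁` into `(S M S)² = S Σ₁ S`, so `S M S` and `R`
are positive semidefinite square roots of the same matrix and hence equal; now cancel `S`. -/

namespace Matrix

variable {n 𝕜 : Type*} [Fintype n] [DecidableEq n]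

open scoped ComplexOrder MatrixOrder Matrix.Norms.L2Operator in
theorem PosSemidef.eq_of_mul_self_eq [RCLike 𝕜] {A B : Matrix n n 𝕜} (hA : A.PosSemidef)
    (hB : B.PosSemidef) (h : A * A = B * B) : A = B :=
  (CFC.mul_self_eq_mul_self_iff A B hA.nonneg hB.nonneg).mp h

theorem eq_nonsing_inv_mul_mul_mul_nonsing_inv [CommRing 𝕜] {S : Matrix n n 𝕜} (hS : IsUnit S.det)
    (M : Matrix n n 𝕜) : M = S⁻¹ * (S * M * S) * S⁻¹ := by
  rw [Matrix.mul_assoc S, nonsing_inv_mul_cancel_left S _ hS, mul_nonsing_inv_cancel_right S _ hS]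

end Matrix

theorem stmt_14_general {n : ℕ} (Sigma0 Sigma1 M S R : Matrix (Fin n) (Fin n) ℝ)
    (hM : M.PosDef) (hpush : M * Sigma0 * Mᵀ = Sigma1)
    (hS : S.PosDef) (hSsq : S * S = Sigma0)
    (hR : R.PosDef) (hRsq : R * R = S * Sigma1 * S) :
    M = S⁻¹ * R * S⁻¹ := by
  have hMt : Mᵀ = M := by rw [← conjTranspose_eq_transpose_of_trivial]; exact hM.isHermitian
  have hconj : (S * M * S).PosSemidef := by
    simpa only [hS.isHermitian.eq] using hM.posSemidef.mul_mul_conjTranspose_same S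
  have hsq : (S * M * S) * (S * M * S) = R * R := by
    rw [hRsq, ← hpush, hMt, ← hSsq]; simp only [Matrix.mul_assoc]
  rw [← hconj.eq_of_mul_self_eq hR.posSemidef hsq]
  exact eq_nonsing_inv_mul_mul_mul_nonsing_inv hS.det_pos.ne'.isUnit M

/-- Uniqueness of the symmetric positive definite linear transport between
Gaussians: if M is symmetric positive definite with M Σ₀ Mᵀ = Σ₁ then
M = Σ₀^{-1/2}(Σ₀^{1/2} Σ₁ Σ₀^{1/2})^{1/2} Σ₀^{-1/2}, where S = Σ₀^{1/2} and
R = (S Σ₁ S)^{1/2}. -/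
theorem stmt_14 {n : ℕ} (Sigma0 Sigma1 M S R : Matrix (Fin n) (Fin n) ℝ)
    (h0 : Sigma0.PosDef) (h0s : Sigma0.IsSymm) (h1 : Sigma1.PosDef) (h1s : Sigma1.IsSymm)
    (hM : M.PosDef) (hMs : M.IsSymm) (hpush : M * Sigma0 * Mᵀ = Sigma1)
    (hS : S.PosDef) (hSs : S.IsSymm) (hSsq : S * S = Sigma0)
    (hR : R.PosDef) (hRs : R.IsSymm) (hRsq : R * R = S * Sigma1 * S) :
    M = S⁻¹ * R * S⁻¹ :=
  stmt_14_general Sigma0 Sigma1 M S R hM hpush hS hSsq hR hRsq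
end

section
/- There exist 2×2 symmetric positive definite real matrices A and B such that A·B ≠ B·A, and for any such pair the matrix B·A^{-1/2}·(A^{1/2}(A+B)A^{1/2})^{1/2}·A^{-1/2} is not symmetric. -/
/-!
`X = A^{-1/2} (A^{1/2} (A + B) A^{1/2})^{1/2} A^{-1/2}` is a symmetric solution of `X A X = A + B`.
If `B X` were symmetric, `X` would commute with `B`, and congruence by `X` would fix the commutator:
`X [B, A] X = [B, X A X] = [B, A + B] = [B, A]`. In dimension two the skew-symmetric matrices form a
line on which `C ↦ Xᵀ C X` acts by multiplication with `det X`, so `det X = 1` and hence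
`det A = det (A + B)`, which is impossible because `det` is strictly increasing on positive definite
`2 × 2` matrices.
-/

open Matrix

namespace Matrix

theorem transpose_mul_sub_transpose_mul {R : Type*} [CommRing R] (X Y : Matrix (Fin 2) (Fin 2) R) :
    Xᵀ * (Y - Yᵀ) * X = X.det • (Y - Yᵀ) := by
  ext i j
  fin_cases i <;> fin_cases j <;>
    simp [Matrix.mul_apply, Fin.sum_univ_two, det_fin_two] <;> ring

theorem mul_commutator_mul_of_commute {R : Type*} [Ring R] {X A B : R} (hXB : Commute X B) :
    X * (B * A - A * B) * X = B * (X * A * X) - (X * A * X) * B := by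
  simp only [mul_sub, sub_mul, ← mul_assoc, hXB.eq]
  simp only [mul_assoc, hXB.eq]

theorem inv_mul_mul_inv_mul_mul_self {n R : Type*} [Fintype n] [DecidableEq n] [CommRing R]
    {S Q M : Matrix n n R} (hS : IsUnit S.det) (hQ : Q * Q = S * M * S) :
    S⁻¹ * Q * S⁻¹ * (S * S) * (S⁻¹ * Q * S⁻¹) = M := by
  calc S⁻¹ * Q * S⁻¹ * (S * S) * (S⁻¹ * Q * S⁻¹)
      = S⁻¹ * Q * (S⁻¹ * S) * (S * S⁻¹) * Q * S⁻¹ := by simp only [Matrix.mul_assoc]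
    _ = S⁻¹ * (S * M * S) * S⁻¹ := by
        rw [nonsing_inv_mul _ hS, mul_nonsing_inv _ hS, ← hQ]
        simp only [Matrix.mul_one, Matrix.mul_assoc]
    _ = M := by
        simp only [← Matrix.mul_assoc, nonsing_inv_mul _ hS, Matrix.one_mul]
        rw [Matrix.mul_assoc, mul_nonsing_inv _ hS, Matrix.mul_one]

theorem det_eq_one_of_mul_mul_eq_add {K : Type*} [Field K] {A B X : Matrix (Fin 2) (Fin 2) K}
    (hA : Aᵀ = A) (hB : Bᵀ = B) (hAB : A * B ≠ B * A) (hX : Xᵀ = X) (hXB : Commute X B)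
    (hXAX : X * A * X = A + B) : X.det = 1 := by
  have hC : B * A - A * B = B * A - (B * A)ᵀ := by rw [transpose_mul, hA, hB]
  have hC0 : B * A - A * B ≠ 0 := sub_ne_zero.mpr hAB.symm
  have hfix : X * (B * A - A * B) * X = B * A - A * B := by
    rw [mul_commutator_mul_of_commute hXB, hXAX]; noncomm_ring
  have hscale : X * (B * A - A * B) * X = X.det • (B * A - A * B) := by
    rw [hC, ← transpose_mul_sub_transpose_mul, hX]
  exact smul_left_injective K hC0
    (show X.det • _ = (1 : K) • _ by rw [← hscale, hfix, one_smul])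

theorem posDef_fin_two_of_det_pos {A : Matrix (Fin 2) (Fin 2) ℝ} (hA : A.IsSymm) (h00 : 0 < A 0 0)
    (hdet : 0 < A.det) : A.PosDef := by
  refine posDef_iff_dotProduct_mulVec.mpr ⟨isHermitian_iff_isSymm.mpr hA, fun x hx => ?_⟩
  have h10 : A 1 0 = A 0 1 := hA.apply 0 1
  rw [det_fin_two, h10] at hdet
  simp only [star_trivial, dotProduct, mulVec, Fin.sum_univ_two, h10]
  have hsq : A 0 0 * (x 0 * (A 0 0 * x 0 + A 0 1 * x 1) + x 1 * (A 0 1 * x 0 + A 1 1 * x 1)) =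
      (A 0 0 * x 0 + A 0 1 * x 1) ^ 2 + (A 0 0 * A 1 1 - A 0 1 * A 0 1) * x 1 ^ 2 := by ring
  refine pos_of_mul_pos_right (hsq ▸ ?_) h00.le
  by_cases h1 : x 1 = 0
  · have h0 : x 0 ≠ 0 := fun h0 => hx (funext fun i => by fin_cases i <;> simp [h0, h1])
    simp only [h1, mul_zero, add_zero]
    positivity
  · exact add_pos_of_nonneg_of_pos (sq_nonneg _) (mul_pos hdet (by positivity))

theorem det_lt_det_add_of_posDef {A B : Matrix (Fin 2) (Fin 2) ℝ} (hA : A.PosDef)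
    (hB : B.PosDef) : A.det < (A + B).det := by
  have ha := hA.diag_pos (i := 0)
  have hc := hA.diag_pos (i := 1)
  have hp := hB.diag_pos (i := 0)
  have hr := hB.diag_pos (i := 1)
  have hdA := hA.det_pos
  have hdB := hB.det_pos
  have hA10 : A 1 0 = A 0 1 := hA.isHermitian.apply 0 1
  have hB10 : B 1 0 = B 0 1 := hB.isHermitian.apply 0 1
  simp only [det_fin_two, add_apply, hA10, hB10] at hdA hdB ⊢
  -- The mixed term `A₀₀B₁₁ + A₁₁B₀₀ - 2A₀₁B₀₁` of `det (A + B) - det A - det B` is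
  -- positive by AM-GM, since `(A₀₁B₀₁)² < A₀₀A₁₁B₀₀B₁₁`.
  nlinarith [sq_nonneg (A 0 0 * B 1 1 - A 1 1 * B 0 0), mul_pos hdA hdB,
    mul_pos ha hr, mul_pos hc hp]

end Matrix

/-- There exist 2×2 symmetric positive definite matrices A, B with A·B ≠ B·A, and
for any such pair (with S = A^{1/2}, R = (A^{1/2}(A+B)A^{1/2})^{1/2}) the matrix
B·S⁻¹·R·S⁻¹ is not symmetric. -/
theorem stmt_16 :
    (∃ A B : Matrix (Fin 2) (Fin 2) ℝ,
      A.PosDef ∧ A.IsSymm ∧ B.PosDef ∧ B.IsSymm ∧ A * B ≠ B * A) ∧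
    ∀ A B S R : Matrix (Fin 2) (Fin 2) ℝ,
      A.PosDef → A.IsSymm → B.PosDef → B.IsSymm → A * B ≠ B * A →
      S.PosDef → S.IsSymm → S * S = A →
      R.PosDef → R.IsSymm → R * R = S * (A + B) * S →
      ¬ (B * S⁻¹ * R * S⁻¹).IsSymm := by
  refine ⟨⟨!![2, 0; 0, 1], !![1, 1; 1, 2], ?_⟩, ?_⟩
  · have hA : (!![2, 0; 0, 1] : Matrix (Fin 2) (Fin 2) ℝ).IsSymm := by
      ext i j; fin_cases i <;> fin_cases j <;> rfl
    have hB : (!![1, 1; 1, 2] : Matrix (Fin 2) (Fin 2) ℝ).IsSymm := by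
      ext i j; fin_cases i <;> fin_cases j <;> rfl
    refine ⟨posDef_fin_two_of_det_pos hA (by simp) (by simp [det_fin_two]), hA,
      posDef_fin_two_of_det_pos hB (by simp) (by simp [det_fin_two]), hB, fun h => ?_⟩
    simpa [Matrix.mul_apply, Fin.sum_univ_two] using congrFun (congrFun h 0) 1
  · intro A B S R hApos hA hBpos hB hAB hS hSsymm hSS _ hRsymm hRR hsymm
    have hSdet : IsUnit S.det := isUnit_iff_ne_zero.mpr hS.det_pos.ne'
    set X := S⁻¹ * R * S⁻¹
    have hX : Xᵀ = X := by
      simp only [X, transpose_mul, transpose_nonsing_inv, hSsymm.eq, hRsymm.eq, Matrix.mul_assoc]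
    have hXB : Commute X B := by
      have hXherm : X.IsHermitian := isHermitian_iff_isSymm.mpr hX
      refine ((hBpos.isHermitian.commute_iff hXherm).mpr ?_).symm
      simpa only [isHermitian_iff_isSymm, X, Matrix.mul_assoc] using hsymm
    have hXAX : X * A * X = A + B := by
      simpa only [hSS] using inv_mul_mul_inv_mul_mul_self hSdet hRR
    have hdet : A.det = (A + B).det := by
      simpa [det_eq_one_of_mul_mul_eq_add hA hB hAB hX hXB hXAX] using congrArg det hXAX
    exact (det_lt_det_add_of_posDef hApos hBpos).ne hdet
end
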